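/- arXiv:2210.12304 — 2 statements merged into one kernel-verified Lean document; each statement's English description precedes it below -/
import Mathlib

section
/- Define Φ_0(x) = x, Φ_k(x) = x + Φ_{k-1}(x)², and set w_k = (k+4)/3 − 2/((k+2)(k+3)). Then for every ε > 0 and every k ≥ 0, Φ_k(1/4 + ε) ≥ Φ_k(1/4) + w_k·ε. -/
/-!
Write `a_k = Φ_k(1/4)`. By induction `a_k ≥ (k+2)/(2(k+4))`, and the slopes satisfy
`w_{k+1} = 1 + (k+2)/(k+4) · w_k ≤ 1 + 2 a_k w_k`. Squaring `Φ_k(1/4+ε) ≥ a_k + w_k ε`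
gives `Φ_k(1/4+ε)² ≥ a_k² + 2 a_k w_k ε`, so the bound propagates from `k` to `k+1`.
-/

def Phi : ℕ → ℝ → ℝ
  | 0, x => x
  | k + 1, x => x + (Phi k x) ^ 2

noncomputable def phiSlope (k : ℕ) : ℝ := (k + 4) / 3 - 2 / ((k + 2) * (k + 3))

lemma phiSlope_pos (k : ℕ) : 0 < phiSlope k := by
  have hk : (0 : ℝ) ≤ k := k.cast_nonneg
  have h : 2 / ((k + 2) * (k + 3) : ℝ) ≤ 2 / 6 :=
    div_le_div_of_nonneg_left (by norm_num) (by norm_num) (by nlinarith)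
  unfold phiSlope
  linarith

lemma phiSlope_succ (k : ℕ) : phiSlope (k + 1) = 1 + (k + 2) / (k + 4) * phiSlope k := by
  unfold phiSlope
  push_cast
  field_simp
  ring

lemma Phi_quarter_ge (k : ℕ) : (k + 2) / (2 * (k + 4)) ≤ Phi k (1 / 4) := by
  induction k with
  | zero => norm_num [Phi]
  | succ k ih =>
    have hk : (0 : ℝ) ≤ k := k.cast_nonneg
    calc ((k + 1 : ℕ) + 2 : ℝ) / (2 * ((k + 1 : ℕ) + 4))
        ≤ 1 / 4 + ((k + 2) / (2 * (k + 4))) ^ 2 := by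
          push_cast
          rw [div_pow, div_add_div _ _ (by norm_num) (by positivity),
            div_le_div_iff₀ (by positivity) (by positivity)]
          nlinarith
      _ ≤ 1 / 4 + Phi k (1 / 4) ^ 2 := by gcongr
      _ = Phi (k + 1) (1 / 4) := rfl

lemma Phi_quarter_add_ge {ε : ℝ} (hε : 0 ≤ ε) (k : ℕ) :
    Phi k (1 / 4) + phiSlope k * ε ≤ Phi k (1 / 4 + ε) := by
  induction k with
  | zero => norm_num [Phi, phiSlope]
  | succ k ih =>
    set a := Phi k (1 / 4)
    set b := Phi k (1 / 4 + ε)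
    have ha : (k + 2) / (2 * (k + 4)) ≤ a := Phi_quarter_ge k
    have ha₀ : 0 ≤ a := le_trans (by positivity) ha
    have hw : 0 < phiSlope k := phiSlope_pos k
    have h2a : (k + 2) / (k + 4) ≤ 2 * a := by
      rw [div_le_iff₀ (by positivity)]
      rw [div_le_iff₀ (by positivity)] at ha
      linarith
    have hsq : a ^ 2 + 2 * a * phiSlope k * ε ≤ b ^ 2 := by
      nlinarith [pow_le_pow_left₀ (by positivity) ih 2, mul_nonneg hw.le hε]
    calc Phi (k + 1) (1 / 4) + phiSlope (k + 1) * ε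
        = 1 / 4 + a ^ 2 + ε + (k + 2) / (k + 4) * phiSlope k * ε := by
          rw [phiSlope_succ]; simp only [Phi]; ring
      _ ≤ 1 / 4 + a ^ 2 + ε + 2 * a * phiSlope k * ε := by gcongr
      _ ≤ Phi (k + 1) (1 / 4 + ε) := by simp only [Phi]; linarith

/-- With `w_k = (k+4)/3 − 2/((k+2)(k+3))`, for every `ε > 0` and every `k ≥ 0`,
`Φ_k(1/4 + ε) ≥ Φ_k(1/4) + w_k·ε`. -/
theorem Phi_linear_lower_bound (ε : ℝ) (hε : 0 < ε) (k : ℕ) :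
    Phi k (1 / 4 + ε) ≥
      Phi k (1 / 4) + ((k + 4) / 3 - 2 / ((k + 2) * (k + 3)) : ℝ) * ε :=
  Phi_quarter_add_ge hε.le k
end

section
/- Define Φ_0(x) = x, Φ_k(x) = x + Φ_{k-1}(x)², and let ξ_k be the unique positive root of Φ_k(x) = 1. Then ξ_k → 1/4 as k → ∞. -/
/-!
Since `t² - t + 1/4 = (t - 1/2)² ≥ 0`, each step raises `Φ` by at least `x - 1/4`, so
`Φ_k(x) ≥ x + k (x - 1/4)` and the root satisfies `ξ_k - 1/4 ≤ 3 / (4 (k + 1))`. On `[0, 1/4]`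
the iterates stay in `[0, 1/2)`, so `Φ_k(x) < 1` there and `ξ_k > 1/4`.
-/

open Filter

lemma Phi_nonneg (k : ℕ) {x : ℝ} (hx : 0 ≤ x) : 0 ≤ Phi k x := by
  induction k with
  | zero => exact hx
  | succ k ih => exact add_nonneg hx (sq_nonneg _)

lemma Phi_lt_half (k : ℕ) {x : ℝ} (hx₀ : 0 ≤ x) (hx : x ≤ 1 / 4) : Phi k x < 1 / 2 := by
  induction k with
  | zero => show x < 1 / 2; linarith
  | succ k ih =>
    have hsq : Phi k x ^ 2 < (1 / 2) ^ 2 := pow_lt_pow_left₀ ih (Phi_nonneg k hx₀) two_ne_zero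
    show x + Phi k x ^ 2 < 1 / 2
    linarith

lemma add_mul_sub_quarter_le_Phi (k : ℕ) (x : ℝ) : x + k * (x - 1 / 4) ≤ Phi k x := by
  induction k with
  | zero => simp [Phi]
  | succ k ih =>
    have hstep : Phi k x + (x - 1 / 4) ≤ Phi (k + 1) x := by
      show Phi k x + (x - 1 / 4) ≤ x + Phi k x ^ 2
      nlinarith [sq_nonneg (Phi k x - 1 / 2)]
    push_cast
    linarith

/-- The unique positive roots `ξ_k` of `Φ_k(x) = 1` tend to `1/4` as `k → ∞`. -/
theorem xi_tendsto_quarter (ξ : ℕ → ℝ)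
    (hpos : ∀ k, 0 < ξ k) (hroot : ∀ k, Phi k (ξ k) = 1) :
    Tendsto ξ atTop (nhds (1 / 4)) := by
  have hlower : ∀ k, 1 / 4 ≤ ξ k := fun k => le_of_not_ge fun h => by
    linarith [hroot k ▸ Phi_lt_half k (hpos k).le h]
  have hupper : ∀ k, ξ k ≤ 1 / 4 + 3 / 4 / ((k : ℝ) + 1) := fun k => by
    have h := hroot k ▸ add_mul_sub_quarter_le_Phi k (ξ k)
    rw [← sub_le_iff_le_add', le_div_iff₀ (by positivity)]
    linarith
  have hbound : Tendsto (fun k : ℕ => 1 / 4 + 3 / 4 / ((k : ℝ) + 1)) atTop (nhds (1 / 4)) := by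
    simpa [div_eq_mul_one_div (3 / 4 : ℝ)] using
      (tendsto_one_div_add_atTop_nhds_zero_nat.const_mul (3 / 4 : ℝ)).const_add (1 / 4 : ℝ)
  exact tendsto_of_tendsto_of_tendsto_of_le_of_le tendsto_const_nhds hbound hlower hupper
end
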